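/- arXiv:2402.09772 — 3 statements merged into one kernel-verified Lean document; each statement's English description precedes it below -/
import Mathlib

section
/- For every integer n ≥ 1, every p ∈ [0,1], every υ_0, …, υ_{n−1} ∈ (0,1) (with the convention υ_n = 1), and all real u_0, u_1, …, u_n ∈ [0,1), one has 0 ≤ Q_n(u_0,…,u_n) < 1, the series Σ_{x_0 ≥ 1} Σ_{(y_1,…,y_n) ∈ ℕ^n} L(x_0, y_1, …, y_n) · u_0^{x_0} u_1^{y_1} ⋯ u_n^{y_n} converges, and its sum equals u_0 υ_0 υ_1 ⋯ υ_{n−1} (p u_1 + q)(p u_2 + q) ⋯ (p u_n + q) / (1 − Q_n(u_0,…,u_n)). -/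
open scoped BigOperators

noncomputable section

/-- Binomial coefficient `C(m,k)` for integers, with the convention that it is `0`
when `k < 0` or `k > m`. -/
def ichoose (m k : ℤ) : ℝ := if 0 ≤ k ∧ k ≤ m then ((m.toNat).choose k.toNat : ℝ) else 0

/-- The previous population size: `prevx x0 xs i` is `x0` if `i = 0` and `xs (i-1)` otherwise. -/
def prevx (x0 : ℕ) (xs : ℕ → ℕ) (i : ℕ) : ℕ := if i = 0 then x0 else xs (i - 1)

/-- Extension of a tuple `f : Fin n → ℕ` to all of `ℕ`, with default value `d` beyond `n`. -/
def extFin (n : ℕ) (f : Fin n → ℕ) (d : ℕ) : ℕ → ℕ := fun i => if h : i < n then f ⟨i, h⟩ else d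

/-- Extension of a positive tuple of population sizes to all of `ℕ`. -/
def xbar (n : ℕ) (x : Fin n → ℕ+) : ℕ → ℕ := extFin n (fun j => (x j : ℕ)) 1

/-- The summand of the POPBP likelihood: for hidden trajectory `xs = (x_1, …, x_n)`
(indexed here by `i ∈ {0, …, n-1}`, so `xs i = x_{i+1}`), data `y = (y_1, …, y_n)`
(again `y i = y_{i+1}`), initial population `x0`, detection probability `p` and
transition parameters `υ = (υ_0, …, υ_{n-1})`, this is
`∏_{i=1}^{n} C(x_i, y_i) p^{y_i} q^{x_i - y_i} C(x_i - 1, x_{i-1} - 1) υ_{i-1}^{x_{i-1}} (1-υ_{i-1})^{x_i - x_{i-1}}`. -/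
def popbpTerm (n : ℕ) (p : ℝ) (υ : ℕ → ℝ) (x0 : ℕ) (y : ℕ → ℕ) (xs : ℕ → ℕ) : ℝ :=
  ∏ i ∈ Finset.range n,
    (ichoose (xs i) (y i) * p ^ (y i) * (1 - p) ^ (xs i - y i) *
      ichoose ((xs i : ℤ) - 1) ((prevx x0 xs i : ℤ) - 1) *
      υ i ^ (prevx x0 xs i) * (1 - υ i) ^ (xs i - prevx x0 xs i))

/-- The POPBP likelihood `L(x_0, y_1, …, y_n)`: the sum over hidden trajectories
`(x_1, …, x_n) ∈ (ℕ∖{0})^n` of `popbpTerm`. -/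
def popbpL (n : ℕ) (p : ℝ) (υ : ℕ → ℝ) (x0 : ℕ) (y : Fin n → ℕ) : ℝ :=
  ∑' x : Fin n → ℕ+, popbpTerm n p υ x0 (extFin n y 0) (xbar n x)

/-- Evaluation of the polynomials `Q_i`: `Q_0 = (1 - υ_0) + υ_0 u_0` and
`Q_i = (1 - υ_i) + υ_i (p u_i + q) Q_{i-1}`. -/
def Qeval (p : ℝ) (υ : ℕ → ℝ) (u : ℕ → ℝ) : ℕ → ℝ
  | 0 => (1 - υ 0) + υ 0 * u 0
  | (i + 1) => (1 - υ (i + 1)) + υ (i + 1) * (p * u (i + 1) + (1 - p)) * Qeval p υ u i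

/-!
Sum out the data first: `∑_y C(x, y) p^y q^(x-y) u^y = (p u + q)^x`. Then sum out the hidden
sizes from the start of the chain: a geometric weight `r^(x_0 - 1)` on `x_0`, pushed through the
negative-binomial transition `C(x_1 - 1, x_0 - 1) υ_0^x_0 (1 - υ_0)^(x_1 - x_0)` and the factor
`(p u_1 + q)^x_1`, becomes the geometric weight `υ_0 (p u_1 + q) · ρ^(x_1 - 1)` on `x_1`, with
`ρ = (p u_1 + q)(1 - υ_0 + υ_0 r)` (a finite binomial sum). Starting from `r = u_0`, the ratio
after `n` steps is `Q_n` (as `υ_n = 1`), and the last geometric series gives the formula. All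
terms are nonnegative, so the order of summation is free, and `Q_n < 1` is the only convergence
condition.
-/

theorem HasSum.prod_of_nonneg {β γ : Type*} {f : β × γ → ℝ} {g : β → ℝ} {s : ℝ}
    (hg : HasSum g s) (hfib : ∀ b, HasSum (fun c => f (b, c)) (g b)) (hf : 0 ≤ f) :
    HasSum f s := by
  have hsum : Summable f := (summable_prod_of_nonneg hf).2
    ⟨fun b => (hfib b).summable, by simpa only [(hfib _).tsum_eq] using hg.summable⟩
  exact hg.unique (hsum.hasSum.prod_fiberwise hfib) ▸ hsum.hasSum

namespace POPBP

open Finset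

theorem ichoose_natCast (m k : ℕ) : ichoose m k = if k ≤ m then (m.choose k : ℝ) else 0 := by
  simp [ichoose]

theorem ichoose_nonneg (m k : ℤ) : 0 ≤ ichoose m k := by
  unfold ichoose; split <;> positivity

theorem hasSum_ichoose_mul_pow (m : ℕ) (a c : ℝ) :
    HasSum (fun k : ℕ => ichoose m k * a ^ k * c ^ (m - k)) ((a + c) ^ m) := by
  rw [add_pow]
  convert hasSum_sum_of_ne_finset_zero (L := SummationFilter.unconditional ℕ)
    (s := range (m + 1)) fun k hk => ?_ using 2 with k hk
  · rw [ichoose_natCast, if_pos (by simpa [Nat.lt_succ_iff] using hk)]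
    ring
  · rw [ichoose_natCast, if_neg (by simpa [Nat.lt_succ_iff] using hk)]
    ring

def binomialProb (p : ℝ) (b y : ℕ) : ℝ := ichoose b y * p ^ y * (1 - p) ^ (b - y)

def birthProb (υ : ℝ) (a b : ℕ) : ℝ :=
  ichoose ((b : ℤ) - 1) ((a : ℤ) - 1) * υ ^ a * (1 - υ) ^ (b - a)

theorem binomialProb_nonneg {p : ℝ} (hp : p ∈ Set.Icc 0 1) (b y : ℕ) :
    0 ≤ binomialProb p b y :=
  mul_nonneg (mul_nonneg (ichoose_nonneg _ _) (pow_nonneg hp.1 _))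
    (pow_nonneg (sub_nonneg.2 hp.2) _)

theorem birthProb_nonneg {υ : ℝ} (hυ : υ ∈ Set.Icc 0 1) (a b : ℕ) : 0 ≤ birthProb υ a b :=
  mul_nonneg (mul_nonneg (ichoose_nonneg _ _) (pow_nonneg hυ.1 _))
    (pow_nonneg (sub_nonneg.2 hυ.2) _)

theorem hasSum_binomialProb_mul_pow (p s : ℝ) (b : ℕ) :
    HasSum (fun y => binomialProb p b y * s ^ y) ((p * s + (1 - p)) ^ b) := by
  convert hasSum_ichoose_mul_pow b (p * s) (1 - p) using 2 with y
  rw [binomialProb]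
  ring

theorem hasSum_pow_mul_birthProb (υ r : ℝ) (b : ℕ+) :
    HasSum (fun a : ℕ+ => r ^ ((a : ℕ) - 1) * birthProb υ a b)
      (υ * ((1 - υ) + υ * r) ^ ((b : ℕ) - 1)) := by
  obtain ⟨c, hc⟩ : ∃ c, (b : ℕ) = c + 1 := ⟨_, (PNat.natPred_add_one b).symm⟩
  rw [← Equiv.pnatEquivNat.symm.hasSum_iff, hc, Nat.add_sub_cancel, add_comm (1 - υ),
    mul_comm υ r]
  refine ((hasSum_ichoose_mul_pow c (r * υ) (1 - υ)).mul_left υ).congr_fun fun j => ?_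
  simp only [Function.comp_apply, Equiv.pnatEquivNat_symm_apply, Nat.succPNat_coe,
    Nat.succ_eq_add_one, birthProb, Nat.add_sub_add_right]
  push_cast
  simp only [add_sub_cancel_right]
  ring

theorem hasSum_pow_mul_birthProb_mul_binomialProb {p υ r s : ℝ} (hp : p ∈ Set.Icc 0 1)
    (hυ : υ ∈ Set.Icc 0 1) (hr : 0 ≤ r) (hs : 0 ≤ s) (b : ℕ+) :
    HasSum (fun ay : ℕ+ × ℕ =>
        r ^ ((ay.1 : ℕ) - 1) * birthProb υ ay.1 b * (binomialProb p b ay.2 * s ^ ay.2))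
      (υ * (p * s + (1 - p)) * ((p * s + (1 - p)) * ((1 - υ) + υ * r)) ^ ((b : ℕ) - 1)) := by
  refine HasSum.prod_of_nonneg ?_
    (fun a => (hasSum_binomialProb_mul_pow p s b).mul_left (r ^ ((a : ℕ) - 1) * birthProb υ a b))
    fun ay => ?_
  · have h := (hasSum_pow_mul_birthProb υ r b).mul_right ((p * s + (1 - p)) ^ (b : ℕ))
    obtain ⟨c, hc⟩ : ∃ c, (b : ℕ) = c + 1 := ⟨_, (PNat.natPred_add_one b).symm⟩
    rw [hc, Nat.add_sub_cancel] at h ⊢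
    rwa [show υ * (p * s + (1 - p)) * ((p * s + (1 - p)) * ((1 - υ) + υ * r)) ^ c
      = υ * ((1 - υ) + υ * r) ^ c * (p * s + (1 - p)) ^ (c + 1) by rw [mul_pow, pow_succ]; ring]
  · have := binomialProb_nonneg hp b ay.2
    have := birthProb_nonneg hυ ay.1 b
    positivity

/-- `xs = (x_0, …, x_n)` and `y i = y_{i+1}`. -/
def chainWeight (p : ℝ) (υ u : ℕ → ℝ) (n : ℕ) (xs : Fin (n + 1) → ℕ) (y : Fin n → ℕ) : ℝ :=
  ∏ i : Fin n,
    birthProb (υ i) (xs i.castSucc) (xs i.succ) *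
      (binomialProb p (xs i.succ) (y i) * u (i + 1) ^ y i)

theorem chainWeight_succ (p : ℝ) (υ u : ℕ → ℝ) (n : ℕ) (xs : Fin (n + 2) → ℕ)
    (y : Fin (n + 1) → ℕ) :
    chainWeight p υ u (n + 1) xs y =
      birthProb (υ 0) (xs 0) (xs 1) * (binomialProb p (xs 1) (y 0) * u 1 ^ y 0) *
        chainWeight p (fun i => υ (i + 1)) (fun i => u (i + 1)) n (Fin.tail xs) (Fin.tail y) := by
  simp only [chainWeight, Fin.prod_univ_succ, Fin.tail, ← Fin.succ_castSucc]
  rfl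

structure Admissible (n : ℕ) (p : ℝ) (υ u : ℕ → ℝ) : Prop where
  p_mem : p ∈ Set.Icc 0 1
  υ_mem : ∀ i < n, υ i ∈ Set.Ioo 0 1
  υ_eq_one : υ n = 1
  u_mem : ∀ i ≤ n, u i ∈ Set.Ico 0 1

/-- The variables of the chain restarted at `x_1`: the ratio `(p u_1 + q) Q_0` of its geometric
initial weight takes the place of `u_0`. -/
def shiftVars (p : ℝ) (υ u : ℕ → ℝ) : ℕ → ℝ
  | 0 => (p * u 1 + (1 - p)) * Qeval p υ u 0
  | i + 1 => u (i + 2)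

theorem Qeval_succ_eq_shiftVars (p : ℝ) (υ u : ℕ → ℝ) (n : ℕ) :
    Qeval p υ u (n + 1) = Qeval p (fun i => υ (i + 1)) (shiftVars p υ u) n := by
  induction n with
  | zero => simp only [Qeval, shiftVars]; ring
  | succ n ih => rw [Qeval, ih]; rfl

theorem Qeval_zero_of_eq_one {p : ℝ} {υ : ℕ → ℝ} (u : ℕ → ℝ) (hυ : υ 0 = 1) :
    Qeval p υ u 0 = u 0 := by
  simp [Qeval, hυ]

theorem Admissible.shift {n : ℕ} {p : ℝ} {υ u : ℕ → ℝ} (h : Admissible (n + 1) p υ u) :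
    Admissible n p (fun i => υ (i + 1)) (shiftVars p υ u) where
  p_mem := h.p_mem
  υ_mem i hi := h.υ_mem (i + 1) (by omega)
  υ_eq_one := h.υ_eq_one
  u_mem
    | 0, _ => by
      obtain ⟨hp0, hp1⟩ := h.p_mem
      obtain ⟨hυ0, hυ1⟩ := h.υ_mem 0 (by omega)
      obtain ⟨hu0, hu0'⟩ := h.u_mem 0 (by omega)
      obtain ⟨hu1, hu1'⟩ := h.u_mem 1 (by omega)
      have ht0 : 0 ≤ p * u 1 + (1 - p) := by nlinarith
      have ht1 : p * u 1 + (1 - p) ≤ 1 := by nlinarith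
      have hQ0 : 0 ≤ (1 - υ 0) + υ 0 * u 0 := by nlinarith
      have hQ1 : (1 - υ 0) + υ 0 * u 0 < 1 := by nlinarith
      exact ⟨mul_nonneg ht0 hQ0, by simp only [shiftVars, Qeval]; nlinarith⟩
    | i + 1, hi => h.u_mem (i + 2) (by omega)

theorem Qeval_mem_Ico {n : ℕ} {p : ℝ} {υ u : ℕ → ℝ} (h : Admissible n p υ u) :
    Qeval p υ u n ∈ Set.Ico 0 1 := by
  induction n generalizing υ u with
  | zero => exact Qeval_zero_of_eq_one u h.υ_eq_one ▸ h.u_mem 0 le_rfl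
  | succ n ih => exact Qeval_succ_eq_shiftVars p υ u n ▸ ih h.shift

theorem chainWeight_nonneg {n : ℕ} {p : ℝ} {υ u : ℕ → ℝ} (h : Admissible n p υ u)
    (xs : Fin (n + 1) → ℕ) (y : Fin n → ℕ) : 0 ≤ chainWeight p υ u n xs y := by
  refine prod_nonneg fun i _ => ?_
  have hυ := h.υ_mem i i.isLt
  have := birthProb_nonneg ⟨hυ.1.le, hυ.2.le⟩ (xs i.castSucc) (xs i.succ)
  have := binomialProb_nonneg h.p_mem (xs i.succ) (y i)
  have := (h.u_mem (i + 1) i.isLt).1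
  positivity

def consPairEquiv (α β : Type*) (n : ℕ) :
    ((Fin (n + 1) → α) × (Fin n → β)) × (α × β) ≃ (Fin (n + 2) → α) × (Fin (n + 1) → β) where
  toFun z := (Fin.cons z.2.1 z.1.1, Fin.cons z.2.2 z.1.2)
  invFun z := ((Fin.tail z.1, Fin.tail z.2), (z.1 0, z.2 0))
  left_inv := by rintro ⟨⟨xs, y⟩, a, b⟩; simp
  right_inv := by rintro ⟨xs, y⟩; simp

theorem hasSum_chainWeight {n : ℕ} {p : ℝ} {υ u : ℕ → ℝ} (h : Admissible n p υ u) :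
    HasSum (fun z : (Fin (n + 1) → ℕ+) × (Fin n → ℕ) =>
        u 0 ^ ((z.1 0 : ℕ) - 1) * chainWeight p υ u n (fun i => z.1 i) z.2)
      ((∏ i ∈ range n, υ i * (p * u (i + 1) + (1 - p))) / (1 - Qeval p υ u n)) := by
  induction n generalizing υ u with
  | zero =>
    let e : (Fin 1 → ℕ+) × (Fin 0 → ℕ) ≃ ℕ :=
      (Equiv.prodUnique _ _).trans ((Equiv.funUnique (Fin 1) ℕ+).trans Equiv.pnatEquivNat)
    rw [← e.symm.hasSum_iff, Qeval_zero_of_eq_one u h.υ_eq_one, prod_range_zero, one_div]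
    refine (hasSum_geometric_of_lt_one (h.u_mem 0 le_rfl).1 (h.u_mem 0 le_rfl).2).congr_fun
      fun j => ?_
    simp [e, chainWeight]
  | succ n ih =>
    rw [← (consPairEquiv ℕ+ ℕ n).hasSum_iff, prod_range_succ', Qeval_succ_eq_shiftVars, zero_add,
      mul_comm, mul_div_assoc]
    have hυ0 := h.υ_mem 0 (by omega)
    refine HasSum.prod_of_nonneg ((ih h.shift).mul_left (υ 0 * (p * u 1 + (1 - p))))
      (fun c => ?_) fun z => ?_
    · have hstep := (hasSum_pow_mul_birthProb_mul_binomialProb h.p_mem ⟨hυ0.1.le, hυ0.2.le⟩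
        (h.u_mem 0 (by omega)).1 (h.u_mem 1 (by omega)).1 (c.1 0)).mul_right
        (chainWeight p (fun i => υ (i + 1)) (shiftVars p υ u) n (fun i => c.1 i) c.2)
      rw [← mul_assoc]
      refine hstep.congr_fun fun ay => ?_
      simp only [consPairEquiv, Equiv.coe_fn_mk, Function.comp_apply, chainWeight_succ,
        Fin.cons_zero, Fin.cons_one, mul_assoc]
      rfl
    · exact mul_nonneg (pow_nonneg (h.u_mem 0 (by omega)).1 _) (chainWeight_nonneg h _ _)

theorem prevx_xbar (x0 : ℕ+) {n : ℕ} (x : Fin n → ℕ+) (i : Fin n) :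
    prevx x0 (xbar n x) i = (Fin.cons x0 x : Fin (n + 1) → ℕ+) i.castSucc := by
  rcases i with ⟨_ | j, hj⟩
  · simp [prevx]
  · simp only [prevx, xbar, extFin, if_neg (Nat.succ_ne_zero j), Nat.add_sub_cancel,
      dif_pos (show j < n by omega)]
    rfl

theorem popbpTerm_mul_prod_pow (p : ℝ) (υ u : ℕ → ℝ) {n : ℕ} (x0 : ℕ+) (x : Fin n → ℕ+)
    (y : Fin n → ℕ) :
    popbpTerm n p υ x0 (extFin n y 0) (xbar n x) * ∏ i : Fin n, u (i + 1) ^ y i =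
      chainWeight p υ u n (fun i => (Fin.cons x0 x : Fin (n + 1) → ℕ+) i) y := by
  rw [popbpTerm, prod_range, ← prod_mul_distrib]
  refine prod_congr rfl fun i _ => ?_
  rw [prevx_xbar]
  simp only [xbar, extFin, Fin.is_lt, dif_pos, Fin.eta, Fin.cons_succ, birthProb, binomialProb]
  ring

theorem hasSum_popbpL_mul_pow {n : ℕ} {p : ℝ} {υ u : ℕ → ℝ} (h : Admissible n p υ u) :
    HasSum (fun z : ℕ+ × (Fin n → ℕ) =>
        popbpL n p υ z.1 z.2 * u 0 ^ (z.1 : ℕ) * ∏ i : Fin n, u (i + 1) ^ z.2 i)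
      (u 0 * (∏ i ∈ range n, υ i) * (∏ i ∈ range n, (p * u (i + 1) + (1 - p))) /
        (1 - Qeval p υ u n)) := by
  let e : (ℕ+ × (Fin n → ℕ)) × (Fin n → ℕ+) ≃ (Fin (n + 1) → ℕ+) × (Fin n → ℕ) :=
    { toFun z := (Fin.cons z.1.1 z.2, z.1.2)
      invFun z := ((z.1 0, z.2), Fin.tail z.1)
      left_inv := by rintro ⟨⟨a, y⟩, x⟩; simp
      right_inv := by rintro ⟨xs, y⟩; simp }
  have hF := e.hasSum_iff.mpr ((hasSum_chainWeight h).mul_left (u 0))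
  rw [mul_assoc (u 0), ← prod_mul_distrib, mul_div_assoc]
  refine (hF.prod_fiberwise fun z => (hF.summable.prod_factor z).hasSum).congr_fun fun z => ?_
  rw [popbpL, ← tsum_mul_right, ← tsum_mul_right]
  refine tsum_congr fun x => ?_
  rw [mul_right_comm, popbpTerm_mul_prod_pow, ← Nat.sub_add_cancel z.1.pos, pow_succ]
  simp only [Function.comp_apply, e, Equiv.coe_fn_mk, Fin.cons_zero]
  ring

end POPBP

theorem popbp_generating_function_general
    (n : ℕ) (p : ℝ) (hp : p ∈ Set.Icc (0 : ℝ) 1)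
    (υ : ℕ → ℝ) (hυ : ∀ i < n, υ i ∈ Set.Ioo (0 : ℝ) 1) (hυn : υ n = 1)
    (u : ℕ → ℝ) (hu : ∀ i ≤ n, u i ∈ Set.Ico (0 : ℝ) 1) :
    (0 ≤ Qeval p υ u n ∧ Qeval p υ u n < 1) ∧
    Summable (fun z : ℕ+ × (Fin n → ℕ) =>
      popbpL n p υ (z.1 : ℕ) z.2 * u 0 ^ (z.1 : ℕ) * ∏ i : Fin n, u ((i : ℕ) + 1) ^ (z.2 i)) ∧
    (∑' z : ℕ+ × (Fin n → ℕ),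
        popbpL n p υ (z.1 : ℕ) z.2 * u 0 ^ (z.1 : ℕ) * ∏ i : Fin n, u ((i : ℕ) + 1) ^ (z.2 i)) =
      u 0 * (∏ i ∈ Finset.range n, υ i) * (∏ i ∈ Finset.range n, (p * u (i + 1) + (1 - p))) /
        (1 - Qeval p υ u n) := by
  have h : POPBP.Admissible n p υ u := ⟨hp, hυ, hυn, hu⟩
  have hsum := POPBP.hasSum_popbpL_mul_pow h
  exact ⟨POPBP.Qeval_mem_Ico h, hsum.summable, hsum.tsum_eq⟩

/-- For `n ≥ 1`, `p ∈ [0,1]`, `υ_0, …, υ_{n-1} ∈ (0,1)` (with `υ_n = 1`)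
and `u_0, …, u_n ∈ [0,1)`, one has `0 ≤ Q_n < 1`, the generating-function series of the POPBP
likelihood converges, and its sum equals
`u_0 υ_0 ⋯ υ_{n-1} (p u_1 + q) ⋯ (p u_n + q) / (1 - Q_n)`. -/
theorem popbp_generating_function
    (n : ℕ) (hn : 1 ≤ n) (p : ℝ) (hp : p ∈ Set.Icc (0 : ℝ) 1)
    (υ : ℕ → ℝ) (hυ : ∀ i < n, υ i ∈ Set.Ioo (0 : ℝ) 1) (hυn : υ n = 1)
    (u : ℕ → ℝ) (hu : ∀ i ≤ n, u i ∈ Set.Ico (0 : ℝ) 1) :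
    (0 ≤ Qeval p υ u n ∧ Qeval p υ u n < 1) ∧
    Summable (fun z : ℕ+ × (Fin n → ℕ) =>
      popbpL n p υ (z.1 : ℕ) z.2 * u 0 ^ (z.1 : ℕ) * ∏ i : Fin n, u ((i : ℕ) + 1) ^ (z.2 i)) ∧
    (∑' z : ℕ+ × (Fin n → ℕ),
        popbpL n p υ (z.1 : ℕ) z.2 * u 0 ^ (z.1 : ℕ) * ∏ i : Fin n, u ((i : ℕ) + 1) ^ (z.2 i)) =
      u 0 * (∏ i ∈ Finset.range n, υ i) * (∏ i ∈ Finset.range n, (p * u (i + 1) + (1 - p))) /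
        (1 - Qeval p υ u n) :=
  popbp_generating_function_general n p hp υ hυ hυn u hu
end
end

section
/- For every integer n ≥ 1, every p ∈ [0,1], every υ_0, …, υ_{n−1} ∈ (0,1) (with the convention υ_n = 1), and all real u_0, u_1, …, u_n ∈ [0,1), the generating function of the likelihood satisfies Σ_{x_0 ≥ 1} Σ_{(y_1,…,y_n) ∈ ℕ^n} L(x_0, y_1, …, y_n) u_0^{x_0} u_1^{y_1} ⋯ u_n^{y_n} = Σ_{x_0 ≥ 1, x_1 ≥ 1, …, x_n ≥ 1} (p u_n + q)^{x_n} Π_{i=0}^{n−1} C(x_{i+1} − 1, x_i − 1) w_i^{x_i} υ_i^{x_i} (1 − υ_i)^{x_{i+1} − x_i}, where w_0 = u_0 and w_i = p u_i + q for 1 ≤ i ≤ n−1, both sides being convergent sums of nonnegative terms. -/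
/-!
All terms are nonnegative, so the computation is done in `ℝ≥0∞`, where sums can be reordered
freely, and transferred back to `ℝ` once the right-hand side is known to be finite.

Summing over the data first, `y_i` only enters through `C(x_i, y_i) (p u_i)^{y_i} q^{x_i - y_i}`,
which sums to `(p u_i + q)^{x_i}`; shifting these powers down by one index gives the right-hand
side. For finiteness, the hidden sizes `x_0, …, x_{n-1}` are summed out from the bottom: the
identity `∑_k C(m-1, k-1) a^k b^{m-k} r^{k-1} = a (a r + b)^{m-1}` turns the chain into
`(∏ a_i) R_n^{x_n - 1}` with `R_0 = 1`, `R_{j+1} = a_j R_j + b_j` (`chainRate`), where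
`a_i = w_i υ_i`, `b_i = 1 - υ_i`. Since `u_0 < 1` and `υ_i > 0` we get `R_n < 1`, so the
remaining sum over `x_n` is geometric with ratio `(p u_n + q) R_n < 1`.
-/

open scoped BigOperators

noncomputable section

open scoped ENNReal
open Finset

theorem ENNReal.tsum_fin_pi_prod {α : Type*} :
    ∀ {n : ℕ} (g : Fin n → α → ℝ≥0∞), ∑' y : Fin n → α, ∏ j, g j (y j) = ∏ j, ∑' a, g j a
  | 0, g => by simp
  | n + 1, g => by
    rw [← (Fin.consEquiv fun _ => α).tsum_eq, ENNReal.tsum_prod', Fin.prod_univ_succ,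
      ← ENNReal.tsum_fin_pi_prod, ← ENNReal.tsum_mul_right]
    refine tsum_congr fun a => ?_
    rw [← ENNReal.tsum_mul_left]
    simp [Fin.consEquiv, Fin.prod_univ_succ]

theorem ENNReal.tsum_choose_mul_pow_mul_pow (N : ℕ) (a b : ℝ≥0∞) :
    ∑' k, (N.choose k : ℝ≥0∞) * a ^ k * b ^ (N - k) = (a + b) ^ N := by
  rw [tsum_eq_sum (s := range (N + 1)) fun k hk => by
      simp [Nat.choose_eq_zero_of_lt (by simpa [Nat.lt_succ_iff] using hk)],
    add_pow]
  exact sum_congr rfl fun k _ => by ring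

theorem ENNReal.tsum_pnat_choose_pred (m : ℕ+) (a b r : ℝ≥0∞) :
    ∑' k : ℕ+, (((m : ℕ) - 1).choose ((k : ℕ) - 1) : ℝ≥0∞) * a ^ (k : ℕ) *
        b ^ ((m : ℕ) - k) * r ^ ((k : ℕ) - 1) = a * (a * r + b) ^ ((m : ℕ) - 1) := by
  rw [tsum_pnat_eq_tsum_succ (f := fun k => (((m : ℕ) - 1).choose (k - 1) : ℝ≥0∞) * a ^ k *
        b ^ ((m : ℕ) - k) * r ^ (k - 1)),
    ← ENNReal.tsum_choose_mul_pow_mul_pow, ← ENNReal.tsum_mul_left]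
  refine tsum_congr fun k => ?_
  rw [Nat.add_sub_cancel, show (m : ℕ) - (k + 1) = (m : ℕ) - 1 - k by omega]
  ring

theorem tsum_eq_toReal_tsum_ofReal {ι : Type*} {f : ι → ℝ} (hf : ∀ i, 0 ≤ f i) :
    ∑' i, f i = (∑' i, ENNReal.ofReal (f i)).toReal := by
  rw [ENNReal.tsum_toReal_eq fun _ => ENNReal.ofReal_ne_top]
  simp only [ENNReal.toReal_ofReal (hf _)]

theorem summable_of_tsum_ofReal_ne_top {ι : Type*} {f : ι → ℝ} (hf : ∀ i, 0 ≤ f i)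
    (h : ∑' i, ENNReal.ofReal (f i) ≠ ∞) : Summable f := by
  simpa only [ENNReal.toReal_ofReal (hf _)] using ENNReal.summable_toReal h

theorem ofReal_tsum_mul_of_ne_top {ι : Type*} {f : ι → ℝ} {c : ℝ} (hf : ∀ i, 0 ≤ f i)
    (hc : 0 ≤ c) (h : ∑' i, ENNReal.ofReal (f i * c) ≠ ∞) :
    ENNReal.ofReal ((∑' i, f i) * c) = ∑' i, ENNReal.ofReal (f i * c) := by
  simp only [ENNReal.ofReal_mul' hc, ENNReal.tsum_mul_right] at h ⊢
  rcases eq_or_ne (ENNReal.ofReal c) 0 with h0 | h0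
  · simp [h0]
  · have hf_fin : ∑' i, ENNReal.ofReal (f i) ≠ ∞ := fun htop => h (by simp [htop, h0])
    rw [ENNReal.ofReal_tsum_of_nonneg hf (summable_of_tsum_ofReal_ne_top hf hf_fin)]

section Chain

variable {R : Type*} [CommSemiring R]

def chainWeight (A B : ℕ → R) (X : ℕ → ℕ) (n : ℕ) : R :=
  ∏ i ∈ range n, ((X (i + 1) - 1).choose (X i - 1) : R) * A i ^ X i * B i ^ (X (i + 1) - X i)

def chainRate (A B : ℕ → R) : ℕ → R
  | 0 => 1
  | j + 1 => A j * chainRate A B j + B j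

theorem chainWeight_congr {A B : ℕ → R} {X Y : ℕ → ℕ} {n : ℕ}
    (h : ∀ i ≤ n, X i = Y i) :
    chainWeight A B X n = chainWeight A B Y n :=
  prod_congr rfl fun i hi => by
    have := mem_range.mp hi
    rw [h i (by omega), h (i + 1) (by omega)]

theorem chainWeight_mul_left (c A B : ℕ → R) (X : ℕ → ℕ) (n : ℕ) :
    chainWeight (fun i => c i * A i) B X n =
      (∏ i ∈ range n, c i ^ X i) * chainWeight A B X n := by
  simp only [chainWeight, ← prod_mul_distrib, mul_pow]
  exact prod_congr rfl fun i _ => by ring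

end Chain

theorem one_le_xbar (n : ℕ) (x : Fin n → ℕ+) (i : ℕ) : 1 ≤ xbar n x i := by
  unfold xbar extFin
  split
  · exact (x _).pos
  · rfl

theorem xbar_snoc_of_lt {n : ℕ} (x : Fin n → ℕ+) (m : ℕ+) {i : ℕ} (hi : i < n) :
    xbar (n + 1) (Fin.snoc x m) i = xbar n x i := by
  simp [xbar, extFin, hi, Nat.lt_succ_of_lt hi, Fin.snoc]

theorem xbar_snoc_self {n : ℕ} (x : Fin n → ℕ+) (m : ℕ+) :
    xbar (n + 1) (Fin.snoc x m) n = m := by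
  simp [xbar, extFin, Fin.snoc]

theorem xbar_cons_zero {n : ℕ} (a : ℕ+) (x : Fin n → ℕ+) :
    xbar (n + 1) (Fin.cons a x) 0 = a := by
  simp [xbar, extFin]

theorem xbar_cons_succ {n : ℕ} (a : ℕ+) (x : Fin n → ℕ+) (i : ℕ) :
    xbar (n + 1) (Fin.cons a x) (i + 1) = xbar n x i := by
  by_cases hi : i < n
  · simp [xbar, extFin, hi, ← Fin.succ_mk]
  · simp [xbar, extFin, hi]

theorem prevx_xbar {n : ℕ} (a : ℕ+) (x : Fin n → ℕ+) (i : ℕ) :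
    prevx a (xbar n x) i = xbar (n + 1) (Fin.cons a x) i := by
  cases i with
  | zero => simp [prevx, xbar_cons_zero]
  | succ i => simp [prevx, xbar_cons_succ]

theorem ENNReal.tsum_chainWeight_snoc (A B : ℕ → ℝ≥0∞) :
    ∀ (n : ℕ) (m : ℕ+),
      ∑' t : Fin n → ℕ+, chainWeight A B (xbar (n + 1) (Fin.snoc t m)) n =
      (∏ i ∈ range n, A i) * chainRate A B n ^ ((m : ℕ) - 1)
  | 0, m => by simp [chainWeight, chainRate]
  | n + 1, m => by
    have hsplit : ∀ (k : ℕ+) (t : Fin n → ℕ+),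
        chainWeight A B (xbar (n + 1 + 1) (Fin.snoc (Fin.snoc t k) m)) (n + 1) =
          chainWeight A B (xbar (n + 1) (Fin.snoc t k)) n *
            ((((m : ℕ) - 1).choose ((k : ℕ) - 1) : ℝ≥0∞) * A n ^ (k : ℕ) *
              B n ^ ((m : ℕ) - k)) := by
      intro k t
      rw [chainWeight, prod_range_succ, ← chainWeight,
        chainWeight_congr fun i hi => xbar_snoc_of_lt _ m (Nat.lt_succ_of_le hi),
        xbar_snoc_of_lt _ m n.lt_succ_self, xbar_snoc_self, xbar_snoc_self]
    rw [← (Fin.snocEquiv fun _ => ℕ+).tsum_eq, ENNReal.tsum_prod']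
    have hsnoc : ∀ (k : ℕ+) (t : Fin n → ℕ+),
        (Fin.snocEquiv fun _ => ℕ+) (k, t) = Fin.snoc t k := fun _ _ => rfl
    simp only [hsnoc, hsplit, ENNReal.tsum_mul_right, ENNReal.tsum_chainWeight_snoc]
    rw [prod_range_succ, chainRate, mul_assoc, ← ENNReal.tsum_pnat_choose_pred,
      ← ENNReal.tsum_mul_left]
    exact tsum_congr fun k => by ring

theorem ENNReal.tsum_pow_mul_chainWeight (A B : ℕ → ℝ≥0∞) (s : ℝ≥0∞) (n : ℕ) :
    ∑' x : Fin (n + 1) → ℕ+, s ^ xbar (n + 1) x n * chainWeight A B (xbar (n + 1) x) n =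
      (∏ i ∈ range n, A i) * s * (1 - s * chainRate A B n)⁻¹ := by
  have hsnoc : ∀ (m : ℕ+) (t : Fin n → ℕ+),
      (Fin.snocEquiv fun _ => ℕ+) (m, t) = Fin.snoc t m := fun _ _ => rfl
  rw [← (Fin.snocEquiv fun _ => ℕ+).tsum_eq, ENNReal.tsum_prod']
  simp only [hsnoc, xbar_snoc_self, ENNReal.tsum_mul_left, ENNReal.tsum_chainWeight_snoc]
  rw [tsum_pnat_eq_tsum_succ
      (f := fun k => s ^ k * ((∏ i ∈ range n, A i) * chainRate A B n ^ (k - 1))),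
    ← ENNReal.tsum_geometric, ← ENNReal.tsum_mul_left]
  refine tsum_congr fun k => ?_
  rw [Nat.add_sub_cancel]
  ring

theorem ENNReal.mul_add_lt_one {a b r : ℝ≥0∞} (hr : r < 1) (hab : a + b ≤ 1) (hb : b < 1) :
    a * r + b < 1 := by
  rcases eq_or_ne a 0 with rfl | ha
  · simpa using hb
  have ha_top : a ≠ ∞ := ne_top_of_le_ne_top one_ne_top (le_trans le_self_add hab)
  calc a * r + b < a * 1 + b :=
        ENNReal.add_lt_add_right hb.ne_top ((ENNReal.mul_lt_mul_iff_right ha ha_top).mpr hr)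
    _ ≤ 1 := by rwa [mul_one]

theorem ENNReal.chainRate_lt_one {A B : ℕ → ℝ≥0∞} (h0 : A 0 + B 0 < 1) :
    ∀ {n : ℕ}, 1 ≤ n → (∀ i < n, A i + B i ≤ 1) → (∀ i < n, B i < 1) →
      chainRate A B n < 1
  | 0, hn, _, _ => absurd hn (by norm_num)
  | 1, _, _, _ => by simpa [chainRate] using h0
  | n + 2, _, hAB, hB =>
    ENNReal.mul_add_lt_one
      (ENNReal.chainRate_lt_one h0 (by omega) (fun i hi => hAB i (by omega))
        fun i hi => hB i (by omega))
      (hAB _ (by omega)) (hB _ (by omega))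

theorem prod_range_ite_zero_pow_mul {M : Type*} [CommMonoid M] {n : ℕ} (hn : 1 ≤ n) (c : M)
    (f : ℕ → M) (X : ℕ → ℕ) :
    (∏ i ∈ range n, (if i = 0 then c else f i) ^ X i) * f n ^ X n =
      c ^ X 0 * ∏ i ∈ range n, f (i + 1) ^ X (i + 1) := by
  obtain ⟨m, rfl⟩ := Nat.exists_eq_add_of_le' hn
  rw [prod_range_succ', prod_range_succ (fun i => f (i + 1) ^ X (i + 1))]
  simp only [Nat.add_one_ne_zero, if_false, if_true]
  ac_rfl

theorem mul_add_one_sub_mem_Icc {p a : ℝ} (hp : p ∈ Set.Icc 0 1) (ha : a ∈ Set.Icc 0 1) :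
    p * a + (1 - p) ∈ Set.Icc 0 1 :=
  ⟨by nlinarith [hp.1, hp.2, ha.1], by nlinarith [hp.1, ha.2]⟩

theorem ichoose_nonneg (m k : ℤ) : 0 ≤ ichoose m k := by
  unfold ichoose
  split <;> positivity

theorem ichoose_natCast (a k : ℕ) : ichoose a k = a.choose k := by
  unfold ichoose
  rcases le_or_gt k a with h | h
  · rw [if_pos ⟨k.cast_nonneg, by exact_mod_cast h⟩]
    simp
  · rw [if_neg (by omega), Nat.choose_eq_zero_of_lt h, Nat.cast_zero]

theorem ichoose_sub_one {a b : ℕ} (ha : 1 ≤ a) (hb : 1 ≤ b) :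
    ichoose ((a : ℤ) - 1) ((b : ℤ) - 1) = (a - 1).choose (b - 1) := by
  rw [← ichoose_natCast]
  push_cast [ha, hb]
  rfl

theorem ENNReal.tsum_ofReal_ichoose_mul_pow (N : ℕ) {a b : ℝ} (ha : 0 ≤ a) (hb : 0 ≤ b) :
    ∑' k : ℕ, ENNReal.ofReal (ichoose N k * a ^ k * b ^ (N - k)) =
      ENNReal.ofReal (a + b) ^ N := by
  simp only [ENNReal.ofReal_mul' (pow_nonneg hb _), ENNReal.ofReal_mul' (pow_nonneg ha _),
    ichoose_natCast, ENNReal.ofReal_natCast, ENNReal.ofReal_pow ha, ENNReal.ofReal_pow hb]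
  rw [ENNReal.tsum_choose_mul_pow_mul_pow, ENNReal.ofReal_add ha hb]

theorem chainWeight_nonneg {A B : ℕ → ℝ} {n : ℕ} (hA : ∀ i < n, 0 ≤ A i)
    (hB : ∀ i < n, 0 ≤ B i) (X : ℕ → ℕ) : 0 ≤ chainWeight A B X n :=
  prod_nonneg fun i hi => by
    have := hA i (mem_range.mp hi)
    have := hB i (mem_range.mp hi)
    positivity

theorem ofReal_chainWeight {A B : ℕ → ℝ} {n : ℕ} (hA : ∀ i < n, 0 ≤ A i)
    (hB : ∀ i < n, 0 ≤ B i) (X : ℕ → ℕ) :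
    ENNReal.ofReal (chainWeight A B X n) =
      chainWeight (fun i => ENNReal.ofReal (A i)) (fun i => ENNReal.ofReal (B i)) X n := by
  rw [chainWeight, ENNReal.ofReal_prod_of_nonneg fun i hi => by
    have := hA i (mem_range.mp hi)
    have := hB i (mem_range.mp hi)
    positivity]
  refine prod_congr rfl fun i hi => ?_
  have hAi := hA i (mem_range.mp hi)
  have hBi := hB i (mem_range.mp hi)
  rw [ENNReal.ofReal_mul' (by positivity), ENNReal.ofReal_mul (by positivity),
    ENNReal.ofReal_natCast, ENNReal.ofReal_pow hAi, ENNReal.ofReal_pow hBi]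

def popbpGFTerm (n : ℕ) (p : ℝ) (υ u : ℕ → ℝ) (z : ℕ+ × (Fin n → ℕ)) : ℝ :=
  popbpL n p υ (z.1 : ℕ) z.2 * u 0 ^ (z.1 : ℕ) * ∏ i : Fin n, u ((i : ℕ) + 1) ^ (z.2 i)

def popbpReducedTerm (n : ℕ) (p : ℝ) (υ u : ℕ → ℝ) (x : Fin (n + 1) → ℕ+) : ℝ :=
  (p * u n + (1 - p)) ^ (xbar (n + 1) x n) *
    ∏ i ∈ Finset.range n,
      (ichoose ((xbar (n + 1) x (i + 1) : ℤ) - 1) ((xbar (n + 1) x i : ℤ) - 1) *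
        (if i = 0 then u 0 else p * u i + (1 - p)) ^ (xbar (n + 1) x i) *
        υ i ^ (xbar (n + 1) x i) * (1 - υ i) ^ (xbar (n + 1) x (i + 1) - xbar (n + 1) x i))

section POPBP

variable {n : ℕ} {p : ℝ} {υ u : ℕ → ℝ}

theorem popbpTerm_nonneg (hp : p ∈ Set.Icc 0 1) (hυ : ∀ i < n, υ i ∈ Set.Icc 0 1)
    (x0 : ℕ) (y xs : ℕ → ℕ) : 0 ≤ popbpTerm n p υ x0 y xs :=
  prod_nonneg fun i hi => by
    obtain ⟨hυ0, hυ1⟩ := hυ i (mem_range.mp hi)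
    have := ichoose_nonneg (xs i) (y i)
    have := ichoose_nonneg ((xs i : ℤ) - 1) ((prevx x0 xs i : ℤ) - 1)
    have : 0 ≤ 1 - p := sub_nonneg.mpr hp.2
    have : 0 ≤ 1 - υ i := sub_nonneg.mpr hυ1
    have := hp.1
    positivity

theorem popbpGFTerm_nonneg (hp : p ∈ Set.Icc 0 1) (hυ : ∀ i < n, υ i ∈ Set.Icc 0 1)
    (hu : ∀ i ≤ n, 0 ≤ u i) (z : ℕ+ × (Fin n → ℕ)) : 0 ≤ popbpGFTerm n p υ u z := by
  have hL : 0 ≤ popbpL n p υ z.1 z.2 :=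
    tsum_nonneg fun x => popbpTerm_nonneg hp hυ z.1 (extFin n z.2 0) (xbar n x)
  exact mul_nonneg (mul_nonneg hL (pow_nonneg (hu 0 n.zero_le) _))
    (prod_nonneg fun i _ => pow_nonneg (hu _ i.isLt) _)

theorem popbpReducedTerm_eq_chainWeight (x : Fin (n + 1) → ℕ+) :
    popbpReducedTerm n p υ u x = (p * u n + (1 - p)) ^ xbar (n + 1) x n *
      chainWeight (fun i => (if i = 0 then u 0 else p * u i + (1 - p)) * υ i) (fun i => 1 - υ i)
        (xbar (n + 1) x) n := by
  unfold popbpReducedTerm chainWeight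
  congr 1
  refine prod_congr rfl fun i _ => ?_
  rw [ichoose_sub_one (one_le_xbar _ x _) (one_le_xbar _ x _), mul_pow]
  ring

theorem popbpReducedTerm_nonneg (hp : p ∈ Set.Icc 0 1) (hυ : ∀ i < n, υ i ∈ Set.Icc 0 1)
    (hu : ∀ i ≤ n, u i ∈ Set.Icc 0 1) (x : Fin (n + 1) → ℕ+) :
    0 ≤ popbpReducedTerm n p υ u x := by
  have hs := (mul_add_one_sub_mem_Icc hp (hu n le_rfl)).1
  rw [popbpReducedTerm_eq_chainWeight]
  refine mul_nonneg (pow_nonneg hs _) (chainWeight_nonneg (fun i hi => ?_)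
    (fun i hi => sub_nonneg.mpr (hυ i hi).2) _)
  refine mul_nonneg ?_ (hυ i hi).1
  split_ifs
  exacts [(hu 0 n.zero_le).1, (mul_add_one_sub_mem_Icc hp (hu i hi.le)).1]

theorem tsum_ofReal_popbpReducedTerm_ne_top (hn : 1 ≤ n) (hp : p ∈ Set.Icc 0 1)
    (hυ : ∀ i < n, υ i ∈ Set.Ioc 0 1) (hu : ∀ i ≤ n, u i ∈ Set.Ico 0 1) :
    ∑' x, ENNReal.ofReal (popbpReducedTerm n p υ u x) ≠ ∞ := by
  set w : ℕ → ℝ := fun i => if i = 0 then u 0 else p * u i + (1 - p)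
  have hu' : ∀ i ≤ n, u i ∈ Set.Icc 0 1 := fun i hi => Set.Ico_subset_Icc_self (hu i hi)
  have hw : ∀ i < n, w i ∈ Set.Icc 0 1 := fun i hi => by
    by_cases h0 : i = 0
    · simpa [w, h0] using hu' 0 n.zero_le
    · simpa [w, h0] using mul_add_one_sub_mem_Icc hp (hu' i hi.le)
  have hs := mul_add_one_sub_mem_Icc hp (hu' n le_rfl)
  have hterm : ∀ x : Fin (n + 1) → ℕ+, ENNReal.ofReal (popbpReducedTerm n p υ u x) =
      ENNReal.ofReal (p * u n + (1 - p)) ^ xbar (n + 1) x n *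
        chainWeight (fun i => ENNReal.ofReal (w i * υ i)) (fun i => ENNReal.ofReal (1 - υ i))
          (xbar (n + 1) x) n := fun x => by
    rw [popbpReducedTerm_eq_chainWeight, ENNReal.ofReal_mul (pow_nonneg hs.1 _),
      ENNReal.ofReal_pow hs.1,
      ofReal_chainWeight (fun i hi => mul_nonneg (hw i hi).1 (hυ i hi).1.le)
        (fun i hi => sub_nonneg.mpr (hυ i hi).2)]
  have hrate : chainRate (fun i => ENNReal.ofReal (w i * υ i))
      (fun i => ENNReal.ofReal (1 - υ i)) n < 1 := by
    refine ENNReal.chainRate_lt_one ?_ hn (fun i hi => ?_) (fun i hi => ?_)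
    · obtain ⟨hυ0, hυ1⟩ := hυ 0 hn
      obtain ⟨hu0, hu1⟩ := hu 0 n.zero_le
      rw [← ENNReal.ofReal_add (by positivity) (by linarith), ENNReal.ofReal_lt_one]
      simp only [w, if_true]
      nlinarith
    · obtain ⟨hυ0, hυ1⟩ := hυ i hi
      rw [← ENNReal.ofReal_add (mul_nonneg (hw i hi).1 hυ0.le) (by linarith),
        ENNReal.ofReal_le_one]
      nlinarith [(hw i hi).2]
    · rw [ENNReal.ofReal_lt_one]
      linarith [(hυ i hi).1]
  rw [tsum_congr hterm, ENNReal.tsum_pow_mul_chainWeight]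
  refine ENNReal.mul_ne_top (ENNReal.mul_ne_top
    (ENNReal.prod_ne_top fun _ _ => ENNReal.ofReal_ne_top) ENNReal.ofReal_ne_top) ?_
  rw [Ne, ENNReal.inv_eq_top, tsub_eq_zero_iff_le, not_le]
  calc _ ≤ 1 * chainRate (fun i => ENNReal.ofReal (w i * υ i))
        (fun i => ENNReal.ofReal (1 - υ i)) n :=
        mul_le_mul_left (ENNReal.ofReal_le_one.mpr hs.2) _
    _ < 1 := by rwa [one_mul]

theorem popbpTerm_mul_prod_pow (x0 : ℕ+) (x : Fin n → ℕ+) (y : Fin n → ℕ) :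
    popbpTerm n p υ x0 (extFin n y 0) (xbar n x) * ∏ j : Fin n, u ((j : ℕ) + 1) ^ y j =
      (∏ j : Fin n, ichoose (xbar n x j) (y j) * (p * u ((j : ℕ) + 1)) ^ y j *
          (1 - p) ^ (xbar n x j - y j)) *
        chainWeight υ (fun i => 1 - υ i) (xbar (n + 1) (Fin.cons x0 x)) n := by
  unfold popbpTerm chainWeight
  rw [← Fin.prod_univ_eq_prod_range, ← Fin.prod_univ_eq_prod_range, ← prod_mul_distrib,
    ← prod_mul_distrib]
  refine prod_congr rfl fun j _ => ?_
  have hy : extFin n y 0 j = y j := dif_pos j.isLt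
  rw [hy, prevx_xbar, xbar_cons_succ,
    ichoose_sub_one (one_le_xbar _ x _) (one_le_xbar _ (Fin.cons x0 x) _), mul_pow]
  ring

theorem popbpReducedTerm_cons (hn : 1 ≤ n) (x0 : ℕ+) (x : Fin n → ℕ+) :
    popbpReducedTerm n p υ u (Fin.cons x0 x) =
      (∏ j : Fin n, (p * u ((j : ℕ) + 1) + (1 - p)) ^ xbar n x j) *
        (u 0 ^ (x0 : ℕ) *
          chainWeight υ (fun i => 1 - υ i) (xbar (n + 1) (Fin.cons x0 x)) n) := by
  rw [popbpReducedTerm_eq_chainWeight, chainWeight_mul_left, ← mul_assoc, mul_comm (_ ^ _),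
    prod_range_ite_zero_pow_mul hn, xbar_cons_zero,
    Fin.prod_univ_eq_prod_range fun j => (p * u (j + 1) + (1 - p)) ^ xbar n x j]
  simp only [xbar_cons_succ]
  ring

theorem tsum_ofReal_popbpTerm (hn : 1 ≤ n) (hp : p ∈ Set.Icc 0 1)
    (hυ : ∀ i < n, υ i ∈ Set.Icc 0 1) (hu : ∀ i ≤ n, 0 ≤ u i) (x0 : ℕ+)
    (x : Fin n → ℕ+) :
    ∑' y : Fin n → ℕ, ENNReal.ofReal (popbpTerm n p υ x0 (extFin n y 0) (xbar n x) *
        (u 0 ^ (x0 : ℕ) * ∏ j : Fin n, u ((j : ℕ) + 1) ^ y j)) =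
      ENNReal.ofReal (popbpReducedTerm n p υ u (Fin.cons x0 x)) := by
  have hq : 0 ≤ 1 - p := sub_nonneg.mpr hp.2
  have hpu : ∀ j : Fin n, 0 ≤ p * u ((j : ℕ) + 1) := fun j => mul_nonneg hp.1 (hu _ j.isLt)
  have hrest : 0 ≤ u 0 ^ (x0 : ℕ) *
      chainWeight υ (fun i => 1 - υ i) (xbar (n + 1) (Fin.cons x0 x)) n :=
    mul_nonneg (pow_nonneg (hu 0 n.zero_le) _)
      (chainWeight_nonneg (fun i hi => (hυ i hi).1) (fun i hi => sub_nonneg.mpr (hυ i hi).2) _)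
  have hsplit : ∀ y : Fin n → ℕ,
      ENNReal.ofReal (popbpTerm n p υ x0 (extFin n y 0) (xbar n x) *
        (u 0 ^ (x0 : ℕ) * ∏ j : Fin n, u ((j : ℕ) + 1) ^ y j)) =
      (∏ j : Fin n, ENNReal.ofReal (ichoose (xbar n x j) (y j) * (p * u ((j : ℕ) + 1)) ^ y j *
          (1 - p) ^ (xbar n x j - y j))) *
        ENNReal.ofReal (u 0 ^ (x0 : ℕ) *
          chainWeight υ (fun i => 1 - υ i) (xbar (n + 1) (Fin.cons x0 x)) n) := fun y => by
    have hbin : ∀ j : Fin n, 0 ≤ ichoose (xbar n x j) (y j) * (p * u ((j : ℕ) + 1)) ^ y j *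
        (1 - p) ^ (xbar n x j - y j) := fun j => by
      have := ichoose_nonneg (xbar n x j) (y j)
      have := hpu j
      positivity
    rw [mul_left_comm, popbpTerm_mul_prod_pow, mul_left_comm, ENNReal.ofReal_mul' hrest,
      ENNReal.ofReal_prod_of_nonneg fun j _ => hbin j]
  simp only [hsplit, ENNReal.tsum_mul_right]
  rw [ENNReal.tsum_fin_pi_prod fun j (k : ℕ) => ENNReal.ofReal (ichoose (xbar n x j) k *
    (p * u ((j : ℕ) + 1)) ^ k * (1 - p) ^ (xbar n x j - k))]
  simp only [ENNReal.tsum_ofReal_ichoose_mul_pow _ (hpu _) hq]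
  rw [popbpReducedTerm_cons hn, ENNReal.ofReal_mul' hrest,
    ENNReal.ofReal_prod_of_nonneg fun j _ => pow_nonneg (add_nonneg (hpu j) hq) _]
  simp only [ENNReal.ofReal_pow (add_nonneg (hpu _) hq)]

theorem tsum_tsum_ofReal_popbpTerm (hn : 1 ≤ n) (hp : p ∈ Set.Icc 0 1)
    (hυ : ∀ i < n, υ i ∈ Set.Icc 0 1) (hu : ∀ i ≤ n, 0 ≤ u i) :
    ∑' (z : ℕ+ × (Fin n → ℕ)) (x : Fin n → ℕ+),
        ENNReal.ofReal (popbpTerm n p υ z.1 (extFin n z.2 0) (xbar n x) *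
          (u 0 ^ (z.1 : ℕ) * ∏ j : Fin n, u ((j : ℕ) + 1) ^ z.2 j)) =
      ∑' x, ENNReal.ofReal (popbpReducedTerm n p υ u x) := by
  rw [ENNReal.tsum_prod', ← (Fin.consEquiv fun _ => ℕ+).tsum_eq, ENNReal.tsum_prod']
  refine tsum_congr fun x0 => ?_
  rw [ENNReal.tsum_comm]
  exact tsum_congr fun x => tsum_ofReal_popbpTerm hn hp hυ hu x0 x

end POPBP

theorem popbp_generating_function_reduction_general
    (n : ℕ) (hn : 1 ≤ n) (p : ℝ) (hp : p ∈ Set.Icc (0 : ℝ) 1)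
    (υ : ℕ → ℝ) (hυ : ∀ i < n, υ i ∈ Set.Ioo (0 : ℝ) 1)
    (u : ℕ → ℝ) (hu : ∀ i ≤ n, u i ∈ Set.Ico (0 : ℝ) 1) :
    (∀ z : ℕ+ × (Fin n → ℕ),
      0 ≤ popbpL n p υ (z.1 : ℕ) z.2 * u 0 ^ (z.1 : ℕ) * ∏ i : Fin n, u ((i : ℕ) + 1) ^ (z.2 i)) ∧
    (∀ x : Fin (n + 1) → ℕ+,
      0 ≤ (p * u n + (1 - p)) ^ (xbar (n + 1) x n) *
        ∏ i ∈ Finset.range n,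
          (ichoose ((xbar (n + 1) x (i + 1) : ℤ) - 1) ((xbar (n + 1) x i : ℤ) - 1) *
            (if i = 0 then u 0 else p * u i + (1 - p)) ^ (xbar (n + 1) x i) *
            υ i ^ (xbar (n + 1) x i) * (1 - υ i) ^ (xbar (n + 1) x (i + 1) - xbar (n + 1) x i))) ∧
    Summable (fun z : ℕ+ × (Fin n → ℕ) =>
      popbpL n p υ (z.1 : ℕ) z.2 * u 0 ^ (z.1 : ℕ) * ∏ i : Fin n, u ((i : ℕ) + 1) ^ (z.2 i)) ∧
    Summable (fun x : Fin (n + 1) → ℕ+ =>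
      (p * u n + (1 - p)) ^ (xbar (n + 1) x n) *
        ∏ i ∈ Finset.range n,
          (ichoose ((xbar (n + 1) x (i + 1) : ℤ) - 1) ((xbar (n + 1) x i : ℤ) - 1) *
            (if i = 0 then u 0 else p * u i + (1 - p)) ^ (xbar (n + 1) x i) *
            υ i ^ (xbar (n + 1) x i) * (1 - υ i) ^ (xbar (n + 1) x (i + 1) - xbar (n + 1) x i))) ∧
    (∑' z : ℕ+ × (Fin n → ℕ),
        popbpL n p υ (z.1 : ℕ) z.2 * u 0 ^ (z.1 : ℕ) * ∏ i : Fin n, u ((i : ℕ) + 1) ^ (z.2 i)) =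
      ∑' x : Fin (n + 1) → ℕ+,
        (p * u n + (1 - p)) ^ (xbar (n + 1) x n) *
          ∏ i ∈ Finset.range n,
            (ichoose ((xbar (n + 1) x (i + 1) : ℤ) - 1) ((xbar (n + 1) x i : ℤ) - 1) *
              (if i = 0 then u 0 else p * u i + (1 - p)) ^ (xbar (n + 1) x i) *
              υ i ^ (xbar (n + 1) x i) * (1 - υ i) ^ (xbar (n + 1) x (i + 1) - xbar (n + 1) x i)) := by
  have hυ' : ∀ i < n, υ i ∈ Set.Icc 0 1 := fun i hi => Set.Ioo_subset_Icc_self (hυ i hi)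
  have hu' : ∀ i ≤ n, 0 ≤ u i := fun i hi => (hu i hi).1
  have hF0 := popbpGFTerm_nonneg hp hυ' hu'
  have hG0 := popbpReducedTerm_nonneg hp hυ' fun i hi => Set.Ico_subset_Icc_self (hu i hi)
  have hG := tsum_ofReal_popbpReducedTerm_ne_top hn hp
    (fun i hi => Set.Ioo_subset_Ioc_self (hυ i hi)) hu
  have hT := tsum_tsum_ofReal_popbpTerm hn hp hυ' hu'
  have hslice : ∀ z, ENNReal.ofReal (popbpGFTerm n p υ u z) =
      ∑' x : Fin n → ℕ+, ENNReal.ofReal (popbpTerm n p υ z.1 (extFin n z.2 0) (xbar n x) *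
        (u 0 ^ (z.1 : ℕ) * ∏ j : Fin n, u ((j : ℕ) + 1) ^ z.2 j)) := fun z => by
    rw [popbpGFTerm, mul_assoc]
    exact ofReal_tsum_mul_of_ne_top (fun x => popbpTerm_nonneg hp hυ' _ _ _)
      (mul_nonneg (pow_nonneg (hu' 0 n.zero_le) _)
        (prod_nonneg fun j _ => pow_nonneg (hu' _ j.isLt) _))
      (ne_top_of_le_ne_top (hT ▸ hG) (ENNReal.le_tsum z))
  have hFG : ∑' z, ENNReal.ofReal (popbpGFTerm n p υ u z) =
      ∑' x, ENNReal.ofReal (popbpReducedTerm n p υ u x) := (tsum_congr hslice).trans hT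
  exact ⟨hF0, hG0, summable_of_tsum_ofReal_ne_top hF0 (hFG ▸ hG),
    summable_of_tsum_ofReal_ne_top hG0 hG,
    (tsum_eq_toReal_tsum_ofReal hF0).trans (hFG ▸ tsum_eq_toReal_tsum_ofReal hG0).symm⟩

/-- After summing over the observed data `y` using the binomial theorem,
the generating function of the POPBP likelihood equals the sum, over hidden trajectories
`(x_0, x_1, …, x_n) ∈ (ℕ∖{0})^{n+1}`, of
`(p u_n + q)^{x_n} ∏_{i=0}^{n-1} C(x_{i+1} - 1, x_i - 1) w_i^{x_i} υ_i^{x_i} (1 - υ_i)^{x_{i+1} - x_i}`,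
where `w_0 = u_0` and `w_i = p u_i + q` for `1 ≤ i ≤ n-1`; both sides are convergent sums of
nonnegative terms. -/
theorem popbp_generating_function_reduction
    (n : ℕ) (hn : 1 ≤ n) (p : ℝ) (hp : p ∈ Set.Icc (0 : ℝ) 1)
    (υ : ℕ → ℝ) (hυ : ∀ i < n, υ i ∈ Set.Ioo (0 : ℝ) 1) (hυn : υ n = 1)
    (u : ℕ → ℝ) (hu : ∀ i ≤ n, u i ∈ Set.Ico (0 : ℝ) 1) :
    (∀ z : ℕ+ × (Fin n → ℕ),
      0 ≤ popbpL n p υ (z.1 : ℕ) z.2 * u 0 ^ (z.1 : ℕ) * ∏ i : Fin n, u ((i : ℕ) + 1) ^ (z.2 i)) ∧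
    (∀ x : Fin (n + 1) → ℕ+,
      0 ≤ (p * u n + (1 - p)) ^ (xbar (n + 1) x n) *
        ∏ i ∈ Finset.range n,
          (ichoose ((xbar (n + 1) x (i + 1) : ℤ) - 1) ((xbar (n + 1) x i : ℤ) - 1) *
            (if i = 0 then u 0 else p * u i + (1 - p)) ^ (xbar (n + 1) x i) *
            υ i ^ (xbar (n + 1) x i) * (1 - υ i) ^ (xbar (n + 1) x (i + 1) - xbar (n + 1) x i))) ∧
    Summable (fun z : ℕ+ × (Fin n → ℕ) =>
      popbpL n p υ (z.1 : ℕ) z.2 * u 0 ^ (z.1 : ℕ) * ∏ i : Fin n, u ((i : ℕ) + 1) ^ (z.2 i)) ∧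
    Summable (fun x : Fin (n + 1) → ℕ+ =>
      (p * u n + (1 - p)) ^ (xbar (n + 1) x n) *
        ∏ i ∈ Finset.range n,
          (ichoose ((xbar (n + 1) x (i + 1) : ℤ) - 1) ((xbar (n + 1) x i : ℤ) - 1) *
            (if i = 0 then u 0 else p * u i + (1 - p)) ^ (xbar (n + 1) x i) *
            υ i ^ (xbar (n + 1) x i) * (1 - υ i) ^ (xbar (n + 1) x (i + 1) - xbar (n + 1) x i))) ∧
    (∑' z : ℕ+ × (Fin n → ℕ),
        popbpL n p υ (z.1 : ℕ) z.2 * u 0 ^ (z.1 : ℕ) * ∏ i : Fin n, u ((i : ℕ) + 1) ^ (z.2 i)) =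
      ∑' x : Fin (n + 1) → ℕ+,
        (p * u n + (1 - p)) ^ (xbar (n + 1) x n) *
          ∏ i ∈ Finset.range n,
            (ichoose ((xbar (n + 1) x (i + 1) : ℤ) - 1) ((xbar (n + 1) x i : ℤ) - 1) *
              (if i = 0 then u 0 else p * u i + (1 - p)) ^ (xbar (n + 1) x i) *
              υ i ^ (xbar (n + 1) x i) * (1 - υ i) ^ (xbar (n + 1) x (i + 1) - xbar (n + 1) x i)) :=
  popbp_generating_function_reduction_general n hn p hp υ hυ u hu
end
end

section
/- Fix n ≥ 1, p ∈ [0,1], λ > 0, x_0 ≥ 1, and τ > 0. If the strictly increasing times (t_1*, …, t_n*) with 0 < t_1* < ⋯ < t_n* = 1 maximize the Fisher information FI(λ; t_1, …, t_n) of the POPBP with birth rate λ and time horizon 1 over all 0 < t_1 < ⋯ < t_n = 1, then the scaled times (τ t_1*, …, τ t_n*) maximize the Fisher information FI(λ/τ; s_1, …, s_n) of the POPBP with birth rate λ/τ and time horizon τ over all 0 < s_1 < ⋯ < s_n = τ. -/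
open scoped BigOperators

noncomputable section

/-- The transition parameters `υ_{i} = exp(-λ (t_{i+1} - t_i))` of the pure birth process
with birth rate `lam` and observation times `t`. -/
def upsRate (lam : ℝ) (t : ℕ → ℝ) (i : ℕ) : ℝ := Real.exp (-lam * (t (i + 1) - t i))

/-- The summand `g(y) = (∂L/∂λ (x0, y))² / L(x0, y)` of the Fisher information of the POPBP,
taken to be `0` when `L(x0, y) = 0`. -/
def popbpG (n : ℕ) (p : ℝ) (t : ℕ → ℝ) (lam : ℝ) (x0 : ℕ) (y : Fin n → ℕ) : ℝ :=
  if popbpL n p (upsRate lam t) x0 y = 0 then 0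
  else (deriv (fun μ => popbpL n p (upsRate μ t) x0 y) lam) ^ 2 /
    popbpL n p (upsRate lam t) x0 y

/-- The Fisher information `FI(λ; t_1, …, t_n) = Σ_{y ∈ ℕ^n} (∂L/∂λ (x0, y))² / L(x0, y)`
of the POPBP with birth rate `lam`, detection probability `p`, initial population `x0`
and observation times `t`. -/
def popbpFI (n : ℕ) (p : ℝ) (t : ℕ → ℝ) (lam : ℝ) (x0 : ℕ) : ℝ :=
  ∑' y : Fin n → ℕ, popbpG n p t lam x0 y

/-- If `0 < t_1^* < ⋯ < t_n^* = 1` maximizes the Fisher information of the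
POPBP with birth rate `λ` and time horizon `1`, then `(τ t_1^*, …, τ t_n^*)` maximizes the
Fisher information of the POPBP with birth rate `λ/τ` and time horizon `τ`. -/
theorem popbp_optimal_design_rescaling
    (n : ℕ) (hn : 1 ≤ n) (p : ℝ) (hp : p ∈ Set.Icc (0 : ℝ) 1)
    (lam : ℝ) (hlam : 0 < lam) (x0 : ℕ) (hx0 : 1 ≤ x0) (τ : ℝ) (hτ : 0 < τ)
    (tstar : ℕ → ℝ) (htstar0 : tstar 0 = 0) (htstarmono : ∀ i < n, tstar i < tstar (i + 1))
    (htstarend : tstar n = 1)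
    (hopt : ∀ s : ℕ → ℝ, s 0 = 0 → (∀ i < n, s i < s (i + 1)) → s n = 1 →
      popbpFI n p s lam x0 ≤ popbpFI n p tstar lam x0) :
    ∀ s : ℕ → ℝ, s 0 = 0 → (∀ i < n, s i < s (i + 1)) → s n = τ →
      popbpFI n p s (lam / τ) x0 ≤ popbpFI n p (fun i => τ * tstar i) (lam / τ) x0 := by
  have hτ0 : (τ : ℝ) ≠ 0 := ne_of_gt hτ
  -- derivative of a composition with multiplication by a nonzero constant
  have deriv_scale : ∀ (f : ℝ → ℝ) (c x : ℝ), c ≠ 0 →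
      deriv (fun y => f (c * y)) x = c * deriv f (c * x) := by
    intro f c x hc
    by_cases h : DifferentiableAt ℝ f (c * x)
    · have h1 : HasDerivAt (fun y : ℝ => c * y) c x := by
        simpa using (hasDerivAt_id x).const_mul c
      have h2 : HasDerivAt (fun y => f (c * y)) (deriv f (c * x) * c) x :=
        h.hasDerivAt.comp x h1
      rw [h2.deriv]; ring
    · have h2 : ¬ DifferentiableAt ℝ (fun y => f (c * y)) x := by
        intro hg
        apply h
        have h3 : DifferentiableAt ℝ (fun z : ℝ => c⁻¹ * z) (c * x) :=
          (differentiable_id.const_mul c⁻¹).differentiableAt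
        have h4 : DifferentiableAt ℝ (fun y => f (c * y)) (c⁻¹ * (c * x)) := by
          rw [inv_mul_cancel_left₀ hc]; exact hg
        have h5 := h4.comp (c * x) h3
        have h6 : ((fun y => f (c * y)) ∘ fun z : ℝ => c⁻¹ * z) = f := by
          funext z; simp [Function.comp, mul_inv_cancel_left₀ hc]
        rwa [h6] at h5
      rw [deriv_zero_of_not_differentiableAt h, deriv_zero_of_not_differentiableAt h2,
        mul_zero]
  -- scaling identity for upsRate
  have hups : ∀ (μ : ℝ) (t : ℕ → ℝ), upsRate μ (fun i => τ * t i) = upsRate (τ * μ) t := by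
    intro μ t; funext i; unfold upsRate; ring_nf
  -- the FI scaling identity
  have hG : ∀ (t : ℕ → ℝ) (y : Fin n → ℕ),
      popbpG n p (fun i => τ * t i) (lam / τ) x0 y = τ ^ 2 * popbpG n p t lam x0 y := by
    intro t y
    have hL : ∀ μ : ℝ, popbpL n p (upsRate μ (fun i => τ * t i)) x0 y
        = popbpL n p (upsRate (τ * μ) t) x0 y := by
      intro μ; rw [hups]
    have hlameq : τ * (lam / τ) = lam := by field_simp
    have hD : deriv (fun μ => popbpL n p (upsRate μ (fun i => τ * t i)) x0 y) (lam / τ)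
        = τ * deriv (fun μ => popbpL n p (upsRate μ t) x0 y) lam := by
      have hfun : (fun μ => popbpL n p (upsRate μ (fun i => τ * t i)) x0 y)
          = fun μ => popbpL n p (upsRate (τ * μ) t) x0 y := funext hL
      rw [hfun]
      have h := deriv_scale (fun ν => popbpL n p (upsRate ν t) x0 y) τ (lam / τ) hτ0
      rw [hlameq] at h
      exact h
    unfold popbpG
    rw [hL, hlameq, hD]
    by_cases h0 : popbpL n p (upsRate lam t) x0 y = 0
    · simp [h0]
    · simp only [h0, if_false]
      field_simp
  have hFI : ∀ t : ℕ → ℝ,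
      popbpFI n p (fun i => τ * t i) (lam / τ) x0 = τ ^ 2 * popbpFI n p t lam x0 := by
    intro t
    unfold popbpFI
    rw [← tsum_mul_left]
    exact tsum_congr fun y => hG t y
  intro s hs0 hsmono hsend
  set s' : ℕ → ℝ := fun i => s i / τ with hs'
  have hseq : s = fun i => τ * s' i := by
    funext i; simp [hs', mul_div_cancel₀ _ hτ0]
  have key : popbpFI n p s' lam x0 ≤ popbpFI n p tstar lam x0 := by
    apply hopt
    · simp [hs', hs0]
    · intro i hi
      exact div_lt_div_of_pos_right (hsmono i hi) hτ
    · simp [hs', hsend, div_self hτ0]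
  calc popbpFI n p s (lam / τ) x0 = τ ^ 2 * popbpFI n p s' lam x0 := by
        rw [hseq, hFI]
    _ ≤ τ ^ 2 * popbpFI n p tstar lam x0 :=
        mul_le_mul_of_nonneg_left key (sq_nonneg τ)
    _ = popbpFI n p (fun i => τ * tstar i) (lam / τ) x0 := (hFI tstar).symm
end
end
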